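/- Safe screening rule: let à ∈ ℝ^{n} (feature column), θ* ∈ ℝ^n (the optimal dual), θ̃ a dual feasible point, λ > 0, and suppose ‖θ* − θ̃‖₂ ≤ R and β^⊤θ* = 0 where β^⊤θ̃ = 0. If |Ã^⊤θ̃| + R·sqrt(‖Ã‖₂² − (Ã^⊤β)²/‖β‖₂²) < λ, then |Ã^⊤θ*| < λ. -/

import Mathlib

open scoped RealInnerProductSpace

section

variable {E : Type*} [NormedAddCommGroup E] [InnerProductSpace ℝ E]

/-- The identity also holds for `b = 0`, where both divisions by `‖b‖ ^ 2` give `0`. -/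
theorem norm_sub_smul_inner_div_sq (a b : E) :
    ‖a - (⟪a, b⟫ / ‖b‖ ^ 2) • b‖ ^ 2 = ‖a‖ ^ 2 - ⟪a, b⟫ ^ 2 / ‖b‖ ^ 2 := by
  rw [norm_sub_sq_real, real_inner_smul_right, norm_smul, mul_pow, Real.norm_eq_abs, sq_abs]
  rcases eq_or_ne ‖b‖ 0 with hb | hb
  · simp [hb]
  · field_simp
    ring

/-- On the hyperplane `b⊥`, the functional `⟪a, ·⟫` agrees with `⟪a - proj_b a, ·⟫`. -/
theorem abs_inner_le_sqrt_mul_norm_of_inner_eq_zero {a b v : E} (hv : ⟪b, v⟫ = 0) :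
    |⟪a, v⟫| ≤ √(‖a‖ ^ 2 - ⟪a, b⟫ ^ 2 / ‖b‖ ^ 2) * ‖v‖ := by
  have hproj : ⟪a, v⟫ = ⟪a - (⟪a, b⟫ / ‖b‖ ^ 2) • b, v⟫ := by
    rw [inner_sub_left, real_inner_smul_left, hv, mul_zero, sub_zero]
  rw [hproj, ← norm_sub_smul_inner_div_sq, Real.sqrt_sq (norm_nonneg _)]
  exact abs_real_inner_le_norm _ _

end

theorem safe_screening_rule_general (n : ℕ)
    (At β θs θt : EuclideanSpace ℝ (Fin n))
    (R lam : ℝ)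
    (hball : ‖θs - θt‖ ≤ R) (hθs : ⟪β, θs⟫ = 0) (hθt : ⟪β, θt⟫ = 0)
    (hbound : |⟪At, θt⟫| + R * Real.sqrt (‖At‖ ^ 2 - ⟪At, β⟫ ^ 2 / ‖β‖ ^ 2) < lam) :
    |⟪At, θs⟫| < lam := by
  have hβ : ⟪β, θs - θt⟫ = 0 := by rw [inner_sub_right, hθs, hθt, sub_zero]
  calc |⟪At, θs⟫| = |⟪At, θt⟫ + ⟪At, θs - θt⟫| := by rw [inner_sub_right, add_sub_cancel]
    _ ≤ |⟪At, θt⟫| + |⟪At, θs - θt⟫| := abs_add_le _ _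
    _ ≤ |⟪At, θt⟫| + √(‖At‖ ^ 2 - ⟪At, β⟫ ^ 2 / ‖β‖ ^ 2) * R := by
        gcongr
        exact (abs_inner_le_sqrt_mul_norm_of_inner_eq_zero hβ).trans
          (mul_le_mul_of_nonneg_left hball (Real.sqrt_nonneg _))
    _ < lam := by linarith

/-- Safe screening rule: if the upper bound `|Ã^⊤θ̃| + R √(‖Ã‖² − (Ã^⊤β)²/‖β‖²)` is below
`λ`, then `|Ã^⊤θ*| < λ`. -/
theorem safe_screening_rule (n : ℕ)
    (At β θs θt : EuclideanSpace ℝ (Fin n)) (hβ : β ≠ 0)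
    (R lam : ℝ) (hR : 0 ≤ R) (hlam : 0 < lam)
    (hball : ‖θs - θt‖ ≤ R) (hθs : ⟪β, θs⟫ = 0) (hθt : ⟪β, θt⟫ = 0)
    (hbound : |⟪At, θt⟫| + R * Real.sqrt (‖At‖ ^ 2 - ⟪At, β⟫ ^ 2 / ‖β‖ ^ 2) < lam) :
    |⟪At, θs⟫| < lam :=
  safe_screening_rule_general n At β θs θt R lam hball hθs hθt hbound
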